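/- arXiv:math/0703428 — 4 statements merged into one kernel-verified Lean document; each statement's English description precedes it below -/
import Mathlib

section
/- For every n ∈ ℕ, the determinant of the Hankel matrix H(n+1) with entries i^{τ(s+t)} is a nonzero Gaussian integer; in particular every Hankel matrix of the sequence (i^{τ(n)})_{n≥0} is invertible. -/
/-- Binary digit-sum (Thue–Morse) function. -/
def tau (n : ℕ) : ℕ := (Nat.digits 2 n).sum

/-- The `n × n` Hankel matrix of the sequence `i^{τ(k)}`. -/
noncomputable def Hmat (n : ℕ) : Matrix (Fin n) (Fin n) ℂ :=
  Matrix.of fun s t => Complex.I ^ tau (s.val + t.val)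

/-!
Write `u k = i ^ τ k`. Since `τ (2k) = τ k` and `τ (2k+1) = τ k + 1`, the sequence `u` is the
interleaving of `u` with `i • u`. Listing the even indices of a Hankel matrix before the odd ones
turns it into a `2 × 2` block matrix whose blocks are Hankel matrices of `u` and its shifts, and
block elimination expresses the Hankel determinants of size `n` of `u`, of `u k ± u (k+1)` and of
`u k - u (k+2)` as products of the same determinants at sizes `⌈n/2⌉` and `⌊n/2⌋`, with an extra
factor `1 ± i`. As `1 ± i ≠ 0` and all these determinants of size `1` are nonzero, strong induction
on `n` shows that none of them vanishes. The determinants are Gaussian integers because the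
matrices are images of matrices over `ℤ[i]`.
-/

open Matrix

namespace Matrix

variable {l m n R : Type*} [Fintype m] [DecidableEq m] [CommRing R]

theorem det_fromBlocks_of_eq_mul₁₁ [Fintype n] [DecidableEq n] {A : Matrix m m R}
    {B : Matrix m n R} {C : Matrix n m R} {D : Matrix n n R} (W : Matrix n m R)
    (hC : C = W * A) :
    (fromBlocks A B C D).det = A.det * (D - W * B).det := by
  have h : fromBlocks 1 0 (-W) 1 * fromBlocks A B C D = fromBlocks A B 0 (D - W * B) := by
    simp [fromBlocks_multiply, hC, sub_eq_neg_add]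
  rw [← det_fromBlocks_zero₂₁, ← h, det_mul, det_fromBlocks_zero₁₂, det_one, det_one, one_mul,
    one_mul]

theorem det_fromBlocks_eq_det_add_mul_det_sub (A B : Matrix m m R) :
    (fromBlocks A B B A).det = (A + B).det * (A - B).det := by
  have h : fromBlocks 1 1 0 1 * fromBlocks A B B A * fromBlocks 1 (-1) 0 1 =
      fromBlocks (A + B) 0 B (A - B) := by
    simp only [fromBlocks_multiply]
    congr 1 <;> noncomm_ring
  simpa [det_fromBlocks_zero₂₁, det_fromBlocks_zero₁₂] using congrArg det h

theorem one_submatrix_id_mul (e : l → m) (M : Matrix m n R) :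
    (1 : Matrix m m R).submatrix e id * M = M.submatrix e id :=
  one_submatrix_mul e (Equiv.refl m) M

end Matrix

section Hankel

variable {R : Type*}

def hankel (f : ℕ → R) (p q : ℕ) : Matrix (Fin p) (Fin q) R :=
  of fun s t => f (s + t)

@[simp]
theorem hankel_apply (f : ℕ → R) {p q : ℕ} (s : Fin p) (t : Fin q) :
    hankel f p q s t = f (s + t) := rfl

theorem hankel_submatrix_castLE (f : ℕ → R) {p q r : ℕ} (h : q ≤ p) :
    (hankel f p r).submatrix (Fin.castLE h) id = hankel f q r := rfl

theorem hankel_submatrix_succ [Add R] (f : ℕ → R) {m r : ℕ} :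
    (hankel f (m + 1) r).submatrix Fin.succ id = hankel (fun k => f (k + 1)) m r := by
  ext; simp [add_right_comm]

theorem hankel_add [Add R] (f g : ℕ → R) (p q : ℕ) :
    hankel (fun k => f k + g k) p q = hankel f p q + hankel g p q := rfl

theorem hankel_sub [Sub R] (f g : ℕ → R) (p q : ℕ) :
    hankel (fun k => f k - g k) p q = hankel f p q - hankel g p q := rfl

@[simp]
theorem hankel_const_mul [Mul R] (c : R) (f : ℕ → R) (p q : ℕ) :
    hankel (fun k => c * f k) p q = c • hankel f p q := rfl

def parityEquiv {p q : ℕ} (hqp : q ≤ p) (hpq : p ≤ q + 1) : Fin p ⊕ Fin q ≃ Fin (p + q) where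
  toFun := Sum.elim (fun a => ⟨2 * a, by omega⟩) (fun b => ⟨2 * b + 1, by omega⟩)
  invFun s := if h : s.val % 2 = 0 then .inl ⟨s / 2, by omega⟩ else .inr ⟨s / 2, by omega⟩
  left_inv := by
    rintro (a | b)
    · simp
    · simp only [Sum.elim_inr, Nat.mul_add_mod_self_left, Nat.mod_succ, one_ne_zero, ↓reduceDIte,
        Sum.inr.injEq, Fin.ext_iff]
      omega
  right_inv s := by
    by_cases h : s.val % 2 = 0 <;>
      simp only [h, ↓reduceDIte, Sum.elim_inl, Sum.elim_inr, Fin.ext_iff] <;> omega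

theorem hankel_submatrix_parityEquiv (f : ℕ → R) {p q : ℕ} (hqp : q ≤ p) (hpq : p ≤ q + 1) :
    (hankel f (p + q) (p + q)).submatrix (parityEquiv hqp hpq) (parityEquiv hqp hpq) =
      fromBlocks (hankel (fun k => f (2 * k)) p p) (hankel (fun k => f (2 * k + 1)) p q)
        (hankel (fun k => f (2 * k + 1)) q p) (hankel (fun k => f (2 * k + 2)) q q) := by
  ext (a | a) (b | b) <;>
    simp only [parityEquiv, Equiv.coe_fn_mk, submatrix_apply, Sum.elim_inl, Sum.elim_inr,
      hankel_apply, fromBlocks_apply₁₁, fromBlocks_apply₁₂, fromBlocks_apply₂₁,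
      fromBlocks_apply₂₂] <;> ring_nf

theorem det_hankel_map {S : Type*} [CommRing R] [CommRing S] (φ : R →+* S) (f : ℕ → R)
    (n : ℕ) : (hankel (fun k => φ (f k)) n n).det = φ (hankel f n n).det := by
  rw [RingHom.map_det]; rfl

end Hankel

section Interleave

variable {R : Type*} [CommRing R]

def interleave (c : R) (g : ℕ → R) (n : ℕ) : R := c ^ (n % 2) * g (n / 2)

@[simp]
theorem interleave_two_mul (c : R) (g : ℕ → R) (k : ℕ) : interleave c g (2 * k) = g k := by
  simp [interleave]

@[simp]
theorem interleave_two_mul_add_one (c : R) (g : ℕ → R) (k : ℕ) :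
    interleave c g (2 * k + 1) = c * g k := by
  rw [interleave, Nat.mul_add_mod_self_left, Nat.mul_add_div two_pos]
  simp

@[simp]
theorem interleave_two_mul_add_two (c : R) (g : ℕ → R) (k : ℕ) :
    interleave c g (2 * k + 2) = g (k + 1) := by
  rw [← interleave_two_mul c g (k + 1), mul_add_one]

theorem interleave_sub_shift (c : R) (g : ℕ → R) :
    interleave c (fun k => g k - g (k + 1)) =
      fun n => interleave c g n - interleave c g (n + 2) := by
  funext n
  simp only [interleave, Nat.add_mod_right, show (n + 2) / 2 = n / 2 + 1 by omega]
  ring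

theorem det_hankel_interleave (c : R) (g : ℕ → R) {p q : ℕ} (hqp : q ≤ p) (hpq : p ≤ q + 1) :
    (hankel (interleave c g) (p + q) (p + q)).det =
      (hankel g p p).det * (hankel (fun k => g (k + 1) - c ^ 2 * g k) q q).det := by
  rw [← det_submatrix_equiv_self (parityEquiv hqp hpq), hankel_submatrix_parityEquiv]
  simp only [interleave_two_mul, interleave_two_mul_add_one, interleave_two_mul_add_two,
    hankel_const_mul]
  let P : Matrix (Fin q) (Fin p) R := (1 : Matrix (Fin p) (Fin p) R).submatrix (Fin.castLE hqp) id
  have hP (r : ℕ) (f : ℕ → R) : P * hankel f p r = hankel f q r := by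
    rw [one_submatrix_id_mul, hankel_submatrix_castLE]
  rw [det_fromBlocks_of_eq_mul₁₁ (c • P) (by rw [smul_mul, hP])]
  congr 2
  rw [smul_mul, Matrix.mul_smul, hP, smul_smul]
  ext; simp [sq]

theorem hankel_interleave_add_shift_submatrix_parityEquiv (c ε : R) (g : ℕ → R) {p q : ℕ}
    (hqp : q ≤ p) (hpq : p ≤ q + 1) :
    (hankel (fun k => interleave c g k + ε * interleave c g (k + 1)) (p + q) (p + q)).submatrix
        (parityEquiv hqp hpq) (parityEquiv hqp hpq) =
      fromBlocks ((1 + ε * c) • hankel g p p)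
        (c • hankel g p q + ε • hankel (fun k => g (k + 1)) p q)
        (c • hankel g q p + ε • hankel (fun k => g (k + 1)) q p)
        ((1 + ε * c) • hankel (fun k => g (k + 1)) q q) := by
  have h0 (k : ℕ) :
      interleave c g (2 * k) + ε * interleave c g (2 * k + 1) = (1 + ε * c) * g k := by
    simp only [interleave_two_mul, interleave_two_mul_add_one]; ring
  have h1 (k : ℕ) : interleave c g (2 * k + 1) + ε * interleave c g (2 * k + 1 + 1) =
      c * g k + ε * g (k + 1) := by
    simp only [interleave_two_mul_add_one, interleave_two_mul_add_two]
  have h2 (k : ℕ) : interleave c g (2 * k + 2) + ε * interleave c g (2 * k + 2 + 1) =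
      (1 + ε * c) * g (k + 1) := by
    rw [interleave_two_mul_add_two, show 2 * k + 2 + 1 = 2 * (k + 1) + 1 by ring,
      interleave_two_mul_add_one]
    ring
  rw [hankel_submatrix_parityEquiv]
  simp only [h0, h1, h2, hankel_add, hankel_const_mul]

end Interleave

section Field

variable {K : Type*} [Field K]

theorem one_add_mul_ne_zero_of_sq {c ε : K} (hc : c ^ 2 = -1) (hε : ε ^ 2 = 1)
    (h2 : (2 : K) ≠ 0) : 1 + ε * c ≠ 0 := by
  intro h
  apply h2
  linear_combination (1 - ε * c) * h + ε ^ 2 * hc - hε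

/- In both lemmas below the Schur complement collapses because `(1 + ε * c) ^ 2 = 2 * ε * c`. -/

theorem det_hankel_interleave_add_shift_odd {c ε : K} (hc : c ^ 2 = -1) (hε : ε ^ 2 = 1)
    (hα : 1 + ε * c ≠ 0) (g : ℕ → K) (m : ℕ) :
    (hankel (fun k => interleave c g k + ε * interleave c g (k + 1)) (m + 1 + m) (m + 1 + m)).det =
      (1 + ε * c) * (hankel g (m + 1) (m + 1)).det *
        (hankel (fun k => g k - g (k + 2)) m m).det := by
  rw [← det_submatrix_equiv_self (parityEquiv m.le_succ le_rfl),
    hankel_interleave_add_shift_submatrix_parityEquiv]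
  let P : Matrix (Fin m) (Fin (m + 1)) K := (1 : Matrix _ _ K).submatrix (Fin.castLE m.le_succ) id
  let S : Matrix (Fin m) (Fin (m + 1)) K := (1 : Matrix _ _ K).submatrix Fin.succ id
  have hP (r : ℕ) (f : ℕ → K) : P * hankel f (m + 1) r = hankel f m r := by
    rw [one_submatrix_id_mul, hankel_submatrix_castLE]
  have hS (r : ℕ) (f : ℕ → K) : S * hankel f (m + 1) r = hankel (fun k => f (k + 1)) m r := by
    rw [one_submatrix_id_mul, hankel_submatrix_succ]
  rw [det_fromBlocks_of_eq_mul₁₁ ((1 + ε * c)⁻¹ • (c • P + ε • S)) (by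
    rw [smul_mul, Matrix.mul_smul, smul_smul, inv_mul_cancel₀ hα, one_smul, Matrix.add_mul,
      smul_mul, smul_mul, hP, hS])]
  have hschur : (1 + ε * c) • hankel (fun k => g (k + 1)) m m - (1 + ε * c)⁻¹ • (c • P + ε • S) *
      (c • hankel g (m + 1) m + ε • hankel (fun k => g (k + 1)) (m + 1) m) =
      (1 + ε * c)⁻¹ • hankel (fun k => g k - g (k + 2)) m m := by
    simp only [smul_mul, Matrix.mul_smul, Matrix.add_mul, Matrix.mul_add, hP, hS]
    ext i j
    simp only [Matrix.sub_apply, Matrix.add_apply, Matrix.smul_apply, hankel_apply, smul_eq_mul]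
    field_simp
    linear_combination (ε ^ 2 * g (i + j + 1) - g (i + j)) * hc -
      (g (i + j + 1) + g (i + j + 1 + 1)) * hε
  rw [hschur, det_smul, det_smul, Fintype.card_fin, Fintype.card_fin, inv_pow, pow_succ]
  field_simp

theorem det_hankel_interleave_add_shift_even {c ε : K} (hc : c ^ 2 = -1) (hε : ε ^ 2 = 1)
    (hα : 1 + ε * c ≠ 0) {g : ℕ → K} {m : ℕ} (hg : (hankel g m m).det ≠ 0) :
    (hankel (fun k => interleave c g k + ε * interleave c g (k + 1)) (m + m) (m + m)).det =
      (hankel (fun k => g k + g (k + 1)) m m).det *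
        (hankel (fun k => g k - g (k + 1)) m m).det := by
  rw [← det_submatrix_equiv_self (parityEquiv le_rfl m.le_succ),
    hankel_interleave_add_shift_submatrix_parityEquiv, hankel_add, hankel_sub]
  set A := hankel g m m
  set B := hankel (fun k => g (k + 1)) m m
  have hA : IsUnit A.det := hg.isUnit
  rw [det_fromBlocks_of_eq_mul₁₁ ((1 + ε * c)⁻¹ • ((c • A + ε • B) * A⁻¹)) (by
    rw [smul_mul, Matrix.mul_smul, smul_smul, inv_mul_cancel₀ hα, one_smul,
      nonsing_inv_mul_cancel_right A _ hA])]
  have hschur : (1 + ε * c) • B - (1 + ε * c)⁻¹ • ((c • A + ε • B) * A⁻¹) * (c • A + ε • B) =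
      (1 + ε * c)⁻¹ • (A - B * A⁻¹ * B) := by
    simp only [smul_mul, Matrix.mul_smul, Matrix.add_mul, Matrix.mul_add, Matrix.mul_assoc,
      mul_nonsing_inv _ hA, nonsing_inv_mul _ hA, Matrix.mul_one, Matrix.one_mul]
    match_scalars
    · field_simp
      linear_combination ε ^ 2 * hc - hε
    · linear_combination -(1 + ε * c)⁻¹ * hc
    · linear_combination -(1 + ε * c)⁻¹ * hε
  have hABBA : A.det * (A - B * A⁻¹ * B).det = (A + B).det * (A - B).det := by
    rw [← det_fromBlocks_eq_det_add_mul_det_sub, det_fromBlocks_of_eq_mul₁₁ (B * A⁻¹)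
      (nonsing_inv_mul_cancel_right A B hA).symm]
  rw [hschur, det_smul, det_smul, Fintype.card_fin, ← hABBA, inv_pow]
  field_simp

def HankelDetsNeZero (g : ℕ → K) (n : ℕ) : Prop :=
  (hankel g n n).det ≠ 0 ∧
    (∀ ε : K, ε ^ 2 = 1 → (hankel (fun k => g k + ε * g (k + 1)) n n).det ≠ 0) ∧
    (hankel (fun k => g k - g (k + 2)) n n).det ≠ 0

variable {c : K} (hc : c ^ 2 = -1) (h2 : (2 : K) ≠ 0) {g : ℕ → K} (hg : interleave c g = g)
include hc h2 hg

theorem hankelDetsNeZero_zero_one (hg0 : g 0 = 1) :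
    HankelDetsNeZero g 0 ∧ HankelDetsNeZero g 1 := by
  have hg1 : g 1 = c := by
    rw [← hg, show 1 = 2 * 0 + 1 from rfl, interleave_two_mul_add_one, hg0, mul_one]
  have hg2 : g 2 = c := by rw [← hg, show 2 = 2 * 1 from rfl, interleave_two_mul, hg1]
  refine ⟨by simp [HankelDetsNeZero], ?_⟩
  simp only [HankelDetsNeZero, det_fin_one, hankel_apply, Fin.coe_ofNat_eq_mod, Nat.zero_mod,
    add_zero, zero_add, hg0, hg1, hg2]
  refine ⟨one_ne_zero, fun ε hε => one_add_mul_ne_zero_of_sq hc hε h2, ?_⟩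
  simpa [sub_eq_add_neg] using one_add_mul_ne_zero_of_sq hc (neg_one_sq (R := K)) h2

theorem hankelDetsNeZero_add {p q : ℕ} (hqp : q ≤ p) (hpq : p ≤ q + 1)
    (hp : HankelDetsNeZero g p) (hq : HankelDetsNeZero g q) :
    HankelDetsNeZero g (p + q) := by
  obtain ⟨hp₀, hp₁, hp₂⟩ := hp
  obtain ⟨hq₀, hq₁, hq₂⟩ := hq
  have hsum (n : ℕ) : hankel (fun k => g k + g (k + 1)) n n =
      hankel (fun k => g k + 1 * g (k + 1)) n n := by simp
  have hdiff (n : ℕ) : hankel (fun k => g k - g (k + 1)) n n =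
      hankel (fun k => g k + -1 * g (k + 1)) n n := by simp [sub_eq_add_neg]
  have hshift : (fun k => g (k + 1) - c ^ 2 * g k) = fun k => g k + 1 * g (k + 1) := by
    funext k; rw [hc]; ring
  refine ⟨?_, fun ε hε => ?_, ?_⟩
  · rw [← hg, det_hankel_interleave _ _ hqp hpq, hshift]
    exact mul_ne_zero hp₀ (hq₁ 1 (one_pow 2))
  · have hα := one_add_mul_ne_zero_of_sq hc hε h2
    obtain rfl | rfl : p = q ∨ p = q + 1 := by omega
    · rw [← hg, det_hankel_interleave_add_shift_even hc hε hα hp₀, hsum, hdiff]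
      exact mul_ne_zero (hq₁ 1 (one_pow 2)) (hq₁ (-1) neg_one_sq)
    · rw [← hg, det_hankel_interleave_add_shift_odd hc hε hα]
      exact mul_ne_zero (mul_ne_zero hα hp₀) hq₂
  · have hsub : (fun k => g k - g (k + 2)) = interleave c (fun k => g k - g (k + 1)) := by
      rw [interleave_sub_shift, hg]
    have hshift' : (fun k => g (k + 1) - g (k + 1 + 1) - c ^ 2 * (g k - g (k + 1))) =
        fun k => g k - g (k + 2) := by
      funext k; rw [hc]; ring
    rw [hsub, det_hankel_interleave _ _ hqp hpq, hshift', hdiff]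
    exact mul_ne_zero (hp₁ (-1) neg_one_sq) hq₂

theorem hankelDetsNeZero_of_interleave_eq (hg0 : g 0 = 1) (n : ℕ) : HankelDetsNeZero g n := by
  induction n using Nat.strong_induction_on with
  | _ n ih =>
    obtain ⟨hzero, hone⟩ := hankelDetsNeZero_zero_one hc h2 hg hg0
    obtain ⟨m, rfl | rfl⟩ := Nat.even_or_odd' n
    · rcases m.eq_zero_or_pos with rfl | hm
      · exact hzero
      rw [two_mul]
      exact hankelDetsNeZero_add hc h2 hg le_rfl m.le_succ (ih m (by omega)) (ih m (by omega))
    · rcases m.eq_zero_or_pos with rfl | hm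
      · exact hone
      rw [two_mul, add_right_comm]
      exact hankelDetsNeZero_add hc h2 hg m.le_succ le_rfl (ih (m + 1) (by omega)) (ih m (by omega))

end Field

theorem tau_eq_mod_add_tau_div (n : ℕ) : tau n = n % 2 + tau (n / 2) := by
  rcases n.eq_zero_or_pos with rfl | hn
  · rfl
  · rw [tau, Nat.digits_def' one_lt_two hn, List.sum_cons, tau]

theorem interleave_I_pow_tau :
    interleave Complex.I (fun k => Complex.I ^ tau k) = fun k => Complex.I ^ tau k := by
  funext n
  rw [interleave, tau_eq_mod_add_tau_div n, pow_add]

/-- det H(n+1) is a nonzero Gaussian integer; in particular every Hankel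
matrix of the sequence `(i^{τ(n)})` is invertible. -/
theorem thueMorse_hankel_det_gaussian :
    (∀ n : ℕ, (Hmat (n + 1)).det ≠ 0 ∧
      ∃ a b : ℤ, (Hmat (n + 1)).det = (a : ℂ) + (b : ℂ) * Complex.I) ∧
    ∀ n : ℕ, IsUnit (Hmat n) := by
  have hdet (n : ℕ) : (Hmat n).det ≠ 0 :=
    (hankelDetsNeZero_of_interleave_eq Complex.I_sq two_ne_zero interleave_I_pow_tau rfl n).1
  have hgauss : (fun k => Complex.I ^ tau k) = fun k => GaussianInt.toComplex (⟨0, 1⟩ ^ tau k) := by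
    funext k; simp [GaussianInt.toComplex_def']
  refine ⟨fun n => ⟨hdet (n + 1), ?_⟩, fun n => (isUnit_iff_isUnit_det _).mpr (hdet n).isUnit⟩
  set z := (hankel (fun k => (⟨0, 1⟩ : GaussianInt) ^ tau k) (n + 1) (n + 1)).det
  refine ⟨z.re, z.im, ?_⟩
  rw [← GaussianInt.toComplex_def, ← det_hankel_map, ← hgauss]
  rfl
end

section
/- For fixed p, q, r ∈ ℕ and a field K, the matrix product of two recurrence matrices is a recurrence matrix: if A ∈ K^{M_{p×r}} and B ∈ K^{M_{r×q}} both have finite-dimensional recursive closures, then so does A·B ∈ K^{M_{p×q}}, and dim(closure(A·B)) ≤ dim(closure(A)) · dim(closure(B)). -/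
/-!
The recursive closure of `A·B` lies in the span of all products `a·b` with `a` in the closure
of `A` and `b` in that of `B`: this span contains `A·B`, and it is recursively closed because
splitting off the last letter of the inner word gives `ρ(s,t)(a·b) = ∑_v ρ(s,v)a · ρ(v,t)b`.
The span is the image of the tensor product of the two closures under the bilinear map
`(a, b) ↦ a·b`, which gives the dimension bound.
-/

/-- The free monoid `M_{p×q}` of pairs of equal-length words. -/
def EqPair (p q : ℕ) : Type :=
  {x : List (Fin p) × List (Fin q) // x.1.length = x.2.length}

/-- The single-letter shift operator `ρ(s,t)`: `(ρ(s,t)A)[U,W] = A[Us,Wt]`. -/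
def shiftL (p q : ℕ) (K : Type*) [Field K] (s : Fin p) (t : Fin q) :
    (EqPair p q → K) →ₗ[K] (EqPair p q → K) where
  toFun A := fun x => A ⟨(x.1.1 ++ [s], x.1.2 ++ [t]), by simp [x.2]⟩
  map_add' _ _ := rfl
  map_smul' _ _ := rfl

/-- A subspace of `K^{M_{p×q}}` is recursively closed if it is stable under
all shift operators. -/
def RecClosed (p q : ℕ) (K : Type*) [Field K]
    (V : Submodule K (EqPair p q → K)) : Prop :=
  ∀ (s : Fin p) (t : Fin q), ∀ A ∈ V, shiftL p q K s t A ∈ V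

/-- The recursive closure of `A`: the smallest recursively closed subspace
containing `A`. -/
def recClosure (p q : ℕ) (K : Type*) [Field K] (A : EqPair p q → K) :
    Submodule K (EqPair p q → K) :=
  sInf {V | A ∈ V ∧ RecClosed p q K V}

/-- `A` is a recurrence matrix if its recursive closure is
finite-dimensional. -/
def IsRecMatrix (p q : ℕ) (K : Type*) [Field K] (A : EqPair p q → K) : Prop :=
  FiniteDimensional K (recClosure p q K A)

/-- The matrix product `(A·B)[U,W] = ∑_V A[U,V] B[V,W]`. -/
def matMul {p r q : ℕ} {K : Type*} [Field K]
    (A : EqPair p r → K) (B : EqPair r q → K) : EqPair p q → K :=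
  fun x => ∑ V : Fin x.1.1.length → Fin r,
    A ⟨(x.1.1, List.ofFn V), by simp⟩ * B ⟨(List.ofFn V, x.1.2), by simp [x.2]⟩

namespace Submodule

variable {K M N P : Type*} [Field K] [AddCommGroup M] [AddCommGroup N] [AddCommGroup P]
  [Module K M] [Module K N] [Module K P]

instance finiteDimensional_map₂ (f : M →ₗ[K] N →ₗ[K] P) (V : Submodule K M)
    (W : Submodule K N) [FiniteDimensional K V] [FiniteDimensional K W] :
    FiniteDimensional K (map₂ f V W) := by
  rw [TensorProduct.map₂_eq_range_lift_comp_mapIncl]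
  infer_instance

theorem finrank_map₂_le (f : M →ₗ[K] N →ₗ[K] P) (V : Submodule K M) (W : Submodule K N)
    [FiniteDimensional K V] [FiniteDimensional K W] :
    Module.finrank K (map₂ f V W) ≤ Module.finrank K V * Module.finrank K W := by
  rw [TensorProduct.map₂_eq_range_lift_comp_mapIncl, ← Module.finrank_tensorProduct]
  exact LinearMap.finrank_range_le _

end Submodule

theorem List.ofFn_snoc_cast {α : Type*} {n m : ℕ} (h : n + 1 = m) (V : Fin n → α) (v : α) :
    List.ofFn ((Fin.snoc V v : Fin (n + 1) → α) ∘ Fin.cast h.symm) = List.ofFn V ++ [v] := by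
  subst h
  rw [Fin.cast_refl, Function.comp_id, List.ofFn_succ']
  simp

section RecurrenceMatrix

variable {p r q : ℕ} {K : Type*} [Field K]

theorem mem_recClosure_self (A : EqPair p q → K) : A ∈ recClosure p q K A :=
  Submodule.mem_sInf.mpr fun _ hV => hV.1

theorem recClosed_recClosure (A : EqPair p q → K) : RecClosed p q K (recClosure p q K A) :=
  fun s t X hX => Submodule.mem_sInf.mpr fun V hV => hV.2 s t X (Submodule.mem_sInf.mp hX V hV)

theorem recClosure_le {A : EqPair p q → K} {V : Submodule K (EqPair p q → K)}
    (hA : A ∈ V) (hV : RecClosed p q K V) : recClosure p q K A ≤ V :=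
  sInf_le ⟨hA, hV⟩

variable (p r q K) in
def matMulₗ : (EqPair p r → K) →ₗ[K] (EqPair r q → K) →ₗ[K] (EqPair p q → K) :=
  LinearMap.mk₂ K matMul
    (fun _ _ _ => funext fun _ => (Finset.sum_congr rfl fun _ _ => add_mul _ _ _).trans
      Finset.sum_add_distrib)
    (fun _ _ _ => funext fun _ => (Finset.sum_congr rfl fun _ _ => mul_assoc _ _ _).trans
      (Finset.mul_sum _ _ _).symm)
    (fun _ _ _ => funext fun _ => (Finset.sum_congr rfl fun _ _ => mul_add _ _ _).trans
      Finset.sum_add_distrib)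
    (fun _ _ _ => funext fun _ => (Finset.sum_congr rfl fun _ _ => mul_left_comm _ _ _).trans
      (Finset.mul_sum _ _ _).symm)

@[simp]
theorem matMulₗ_apply (A : EqPair p r → K) (B : EqPair r q → K) :
    matMulₗ p r q K A B = matMul A B :=
  rfl

theorem shiftL_matMul (s : Fin p) (t : Fin q) (A : EqPair p r → K) (B : EqPair r q → K) :
    shiftL p q K s t (matMul A B) =
      ∑ v : Fin r, matMul (shiftL p r K s v A) (shiftL r q K v t B) := by
  funext x
  rw [Finset.sum_apply]
  obtain ⟨⟨U, W⟩, h⟩ := x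
  have hlen : U.length + 1 = (U ++ [s]).length := by simp
  let e : Fin r × (Fin U.length → Fin r) ≃ (Fin (U ++ [s]).length → Fin r) :=
    (Fin.snocEquiv fun _ => Fin r).trans (Equiv.arrowCongr (finCongr hlen) (Equiv.refl _))
  change (∑ V : Fin (U ++ [s]).length → Fin r, _) = ∑ v, ∑ V : Fin U.length → Fin r, _
  rw [← Fintype.sum_prod_type', ← e.sum_comp]
  refine Fintype.sum_congr _ _ fun ⟨v, V⟩ => ?_
  have he : List.ofFn (e (v, V)) = List.ofFn V ++ [v] := List.ofFn_snoc_cast hlen V v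
  exact congr_arg₂ (· * ·) (congrArg A (Subtype.ext (Prod.ext rfl he)))
    (congrArg B (Subtype.ext (Prod.ext he rfl)))

theorem RecClosed.map₂_matMulₗ {V : Submodule K (EqPair p r → K)}
    {W : Submodule K (EqPair r q → K)} (hV : RecClosed p r K V) (hW : RecClosed r q K W) :
    RecClosed p q K (Submodule.map₂ (matMulₗ p r q K) V W) := by
  intro s t X hX
  refine (Submodule.map₂_le (r := (Submodule.map₂ _ V W).comap (shiftL p q K s t))).2
    (fun a ha b hb => ?_) hX
  rw [Submodule.mem_comap, matMulₗ_apply, shiftL_matMul]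
  exact Submodule.sum_mem _ fun v _ =>
    Submodule.apply_mem_map₂ (matMulₗ p r q K) (hV s v a ha) (hW v t b hb)

theorem recClosure_matMul_le (A : EqPair p r → K) (B : EqPair r q → K) :
    recClosure p q K (matMul A B) ≤
      Submodule.map₂ (matMulₗ p r q K) (recClosure p r K A) (recClosure r q K B) :=
  recClosure_le (Submodule.apply_mem_map₂ _ (mem_recClosure_self A) (mem_recClosure_self B))
    ((recClosed_recClosure A).map₂_matMulₗ (recClosed_recClosure B))

end RecurrenceMatrix

/-- The matrix product of two recurrence matrices is a recurrence matrix,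
with complexity at most the product of the complexities. -/
theorem matMul_isRecMatrix {p r q : ℕ} {K : Type*} [Field K]
    (A : EqPair p r → K) (B : EqPair r q → K)
    (hA : IsRecMatrix p r K A) (hB : IsRecMatrix r q K B) :
    IsRecMatrix p q K (matMul A B) ∧
      Module.finrank K (recClosure p q K (matMul A B)) ≤
        Module.finrank K (recClosure p r K A) *
          Module.finrank K (recClosure r q K B) := by
  have : FiniteDimensional K (recClosure p r K A) := hA
  have : FiniteDimensional K (recClosure r q K B) := hB
  have hle := recClosure_matMul_le A B
  exact ⟨Submodule.finiteDimensional_of_le hle,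
    (Submodule.finrank_mono hle).trans (Submodule.finrank_map₂_le _ _ _)⟩
end

section
/- Saturation proposition: let 𝒜 ⊂ Rec_{p×q}(K) be a recursively closed subspace with finite saturation level N (i.e., the restriction map 𝒜[M^{≤N+1}] → 𝒜[M^{≤N}] between spaces of restrictions to words of length ≤ N+1 and ≤ N is an isomorphism). Then the restriction map 𝒜 → 𝒜[M^{≤N}] is an isomorphism; equivalently, any A ∈ 𝒜 vanishing on all words of length ≤ N is identically zero. -/
/-! If `A ∈ 𝒜` vanishes on words of length `≤ N`, saturation makes it vanish up to length
`N + 1`, so every shift `ρ(s,t)A`, which again lies in `𝒜`, vanishes up to length `N`.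
Since `A[Us,Wt] = (ρ(s,t)A)[U,W]`, induction on the word length shows that `A` vanishes
everywhere. -/

section Vanishing

variable {p q : ℕ} {K : Type*} [Field K]

def VanishesUpTo (A : EqPair p q → K) (n : ℕ) : Prop :=
  ∀ x : EqPair p q, x.1.1.length ≤ n → A x = 0

lemma VanishesUpTo.mono {A : EqPair p q → K} {m n : ℕ} (hA : VanishesUpTo A n) (hmn : m ≤ n) :
    VanishesUpTo A m :=
  fun x hx => hA x (hx.trans hmn)

lemma vanishesUpTo_succ_iff {A : EqPair p q → K} {n : ℕ} :
    VanishesUpTo A (n + 1) ↔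
      VanishesUpTo A 0 ∧ ∀ s t, VanishesUpTo (shiftL p q K s t A) n := by
  constructor
  · intro hA
    refine ⟨hA.mono (Nat.zero_le _), fun s t x hx => hA _ ?_⟩
    simpa using hx
  · rintro ⟨hA0, hshift⟩ ⟨⟨u, w⟩, hx⟩ hlen
    rcases List.eq_nil_or_concat' u with rfl | ⟨u', s, rfl⟩
    · exact hA0 _ (by simp)
    rcases List.eq_nil_or_concat' w with rfl | ⟨w', t, rfl⟩
    · simp at hx
    exact hshift s t ⟨(u', w'), by simpa using hx⟩ (by simpa using hlen)

lemma vanishesUpTo_add_of_saturated {V : Submodule K (EqPair p q → K)} (hV : RecClosed p q K V)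
    {N : ℕ} (hsat : ∀ A ∈ V, VanishesUpTo A N → VanishesUpTo A (N + 1)) (m : ℕ) :
    ∀ A ∈ V, VanishesUpTo A N → VanishesUpTo A (N + m) := by
  induction m with
  | zero => exact fun _ _ hA => hA
  | succ m ih =>
    intro A hAV hA
    have hshift := (vanishesUpTo_succ_iff.mp (hsat A hAV hA)).2
    exact vanishesUpTo_succ_iff.mpr
      ⟨hA.mono (Nat.zero_le _), fun s t => ih _ (hV s t A hAV) (hshift s t)⟩

end Vanishing

theorem saturation_general {p q : ℕ} {K : Type*} [Field K]
    (V : Submodule K (EqPair p q → K)) (hV : RecClosed p q K V)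
    (N : ℕ)
    (hsat : ∀ A ∈ V, (∀ x : EqPair p q, x.1.1.length ≤ N → A x = 0) →
      ∀ x : EqPair p q, x.1.1.length ≤ N + 1 → A x = 0) :
    ∀ A ∈ V, (∀ x : EqPair p q, x.1.1.length ≤ N → A x = 0) → A = 0 := by
  intro A hAV hA
  funext x
  exact vanishesUpTo_add_of_saturated hV hsat x.1.1.length A hAV hA x le_add_self

/-- Saturation proposition: if `𝒜` is a recursively closed subspace of
recurrence matrices whose restriction map `𝒜[M^{≤N+1}] → 𝒜[M^{≤N}]` is an
isomorphism (i.e. any element of `𝒜` vanishing on words of length `≤ N`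
vanishes on words of length `≤ N+1`), then restriction `𝒜 → 𝒜[M^{≤N}]` is
an isomorphism: any `A ∈ 𝒜` vanishing on all words of length `≤ N` is
identically zero. -/
theorem saturation {p q : ℕ} {K : Type*} [Field K]
    (V : Submodule K (EqPair p q → K)) (hV : RecClosed p q K V)
    (hrec : ∀ A ∈ V, IsRecMatrix p q K A) (N : ℕ)
    (hsat : ∀ A ∈ V, (∀ x : EqPair p q, x.1.1.length ≤ N → A x = 0) →
      ∀ x : EqPair p q, x.1.1.length ≤ N + 1 → A x = 0) :
    ∀ A ∈ V, (∀ x : EqPair p q, x.1.1.length ≤ N → A x = 0) → A = 0 :=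
  saturation_general V hV N hsat
end

section
/- If K_l denotes the kernel of restriction 𝒜 → 𝒜[M^{≤l}] for a recursively closed subspace 𝒜 ⊂ K^{M_{p×q}}, then K_N = K_{N+1} implies K_n = K_N for all n ≥ N, and ⋂_l K_l = {0}; hence if K_N = K_{N+1} then K_N = {0}. -/
/-- An element of the kernel `K_l` of the restriction `𝒜 → 𝒜[M^{≤l}]`:
it vanishes on all word pairs of length `≤ l`. -/
def VanishLE {p q : ℕ} {K : Type*} [Field K] (l : ℕ) (A : EqPair p q → K) :
    Prop :=
  ∀ x : EqPair p q, x.1.1.length ≤ l → A x = 0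

/-- For a recursively closed subspace `𝒜` with kernels
`K_l = {A ∈ 𝒜 : A vanishes on words of length ≤ l}`: if `K_N = K_{N+1}` then
`K_n = K_N` for all `n ≥ N`; moreover `⋂_l K_l = {0}`; hence `K_N = K_{N+1}`
implies `K_N = {0}`. -/
theorem kernel_stabilizes {p q : ℕ} {K : Type*} [Field K]
    (V : Submodule K (EqPair p q → K)) (hV : RecClosed p q K V) (N : ℕ)
    (hstab : ∀ A ∈ V, VanishLE N A → VanishLE (N + 1) A) :
    (∀ n, N ≤ n → ∀ A ∈ V, VanishLE N A → VanishLE n A) ∧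
    (∀ A ∈ V, (∀ l : ℕ, VanishLE l A) → A = 0) ∧
    (∀ A ∈ V, VanishLE N A → A = 0) := by
  have step : ∀ n, N ≤ n → ∀ A ∈ V, VanishLE n A → VanishLE (n + 1) A := by
    intro n hn
    induction n, hn using Nat.le_induction with
    | base => exact hstab
    | succ n hn ih =>
      intro A hA h x hx
      rcases Nat.lt_or_ge x.1.1.length (n + 2) with hlt | hge
      · exact h x (Nat.lt_succ_iff.mp hlt)
      · have hlen : x.1.1.length = n + 2 := le_antisymm hx hge
        rcases x.1.1.eq_nil_or_concat with h1 | ⟨U, s, hU⟩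
        · simp [h1] at hlen
        · have hlen2 : x.1.2.length = n + 2 := by rw [← x.2, hlen]
          rcases x.1.2.eq_nil_or_concat with h2 | ⟨W, t, hW⟩
          · simp [h2] at hlen2
          · have hUlen : U.length = n + 1 := by
              have := hlen; rw [hU] at this; simpa using this
            have hWlen : W.length = n + 1 := by
              have := hlen2; rw [hW] at this; simpa using this
            have hmem : shiftL p q K s t A ∈ V := hV s t A hA
            have hvan : VanishLE n (shiftL p q K s t A) := by
              intro y hy
              exact h _ (by simpa [shiftL] using Nat.succ_le_succ hy)
            have hvan' := ih _ hmem hvan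
            have hUW : (U, W).1.length = (U, W).2.length := by
              simp [hUlen, hWlen]
            have := hvan' ⟨(U, W), hUW⟩ (by simpa using hUlen.le)
            have hxeq : x = ⟨(U ++ [s], W ++ [t]), by simp [hUlen, hWlen]⟩ := by
              apply Subtype.ext
              rw [List.concat_eq_append] at hU hW
              exact Prod.ext hU hW
            rw [hxeq]
            exact this
  have main : ∀ n, N ≤ n → ∀ A ∈ V, VanishLE N A → VanishLE n A := by
    intro n hn
    induction n, hn using Nat.le_induction with
    | base => exact fun A _ h => h
    | succ n hn ih =>
      intro A hA h
      exact step n hn A hA (ih A hA h)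
  refine ⟨main, fun A _ hall => ?_, fun A hA h => ?_⟩
  · funext x
    simpa using hall x.1.1.length x le_rfl
  · funext x
    rcases Nat.le_total x.1.1.length N with hle | hge
    · simpa using h x hle
    · simpa using main x.1.1.length hge A hA h x le_rfl
end
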